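/- arXiv:1406.0230 — 2 statements merged into one kernel-verified Lean document; each statement's English description precedes it below -/
import Mathlib

section
/- Let μ be a normalized Borel measure on [0,1]^d whose distribution function G satisfies G(x_1,…,x_d) = ∏_{s=1}^d G_s(x_s) for one-dimensional distribution functions G_1,…,G_d of normalized Borel measures on [0,1]. Let G_s^{-1}(y) = min{x ∈ [0,1] : G_s(x) ≥ y} be the pseudo-inverse of G_s, and let T(x_1,…,x_d) = (G_1^{-1}(x_1),…,G_d^{-1}(x_d)). Then for any points x_1,…,x_N ∈ [0,1]^d, D_N*(T(x_1),…,T(x_N);μ) ≤ D_N*(x_1,…,x_N). If in addition all the functions G_1,…,G_d are invertible, then equality holds. -/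
open MeasureTheory Finset

noncomputable section

/-- The quasi-volume `Δ` of `f` over the box `[a,b]` in the coordinates of `S`;
the coordinates outside `S` are fixed according to the anchor point `p`. -/
def quasiVol {d : ℕ} (f : (Fin d → ℝ) → ℝ) (S : Finset (Fin d)) (p a b : Fin d → ℝ) : ℝ :=
  ∑ T ∈ S.powerset, (-1 : ℝ) ^ T.card *
    f (fun i => if i ∈ S then (if i ∈ T then a i else b i) else p i)

/-- A grid (a partition generated by one-dimensional partitions of the sides) of the
box `[lo, hi]` in the coordinates of `S`. -/
structure Grid (d : ℕ) (S : Finset (Fin d)) (lo hi : Fin d → ℝ) where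
  m : Fin d → ℕ
  t : Fin d → ℕ → ℝ
  mono : ∀ i ∈ S, ∀ j k : ℕ, j ≤ k → k ≤ m i → t i j ≤ t i k
  first : ∀ i ∈ S, t i 0 = lo i
  last : ∀ i ∈ S, t i (m i) = hi i

/-- The sum, over all cells of a grid, of the absolute value of the quasi-volume of the cell. -/
def gridSum {d : ℕ} (f : (Fin d → ℝ) → ℝ) (S : Finset (Fin d)) (p lo hi : Fin d → ℝ)
    (G : Grid d S lo hi) : ℝ :=
  ∑ k ∈ Fintype.piFinset (fun i => Finset.range (if i ∈ S then G.m i else 1)),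
    |quasiVol f S p (fun i => G.t i (k i)) (fun i => G.t i (k i + 1))|

/-- The variation in the sense of Vitali of `f` on the face of the box `[lo, hi]` with active
coordinates `S`, the remaining coordinates being fixed according to the anchor `p`:
the supremum of `gridSum` over all grids. -/
def vitaliVar {d : ℕ} (f : (Fin d → ℝ) → ℝ) (S : Finset (Fin d)) (p lo hi : Fin d → ℝ) : ℝ :=
  sSup (Set.range (gridSum f S p lo hi))

/-- The Vitali variation on the face `(S, p)` of `[lo, hi]` is bounded (finite). -/
def BddVitali {d : ℕ} (f : (Fin d → ℝ) → ℝ) (S : Finset (Fin d)) (p lo hi : Fin d → ℝ) : Prop :=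
  BddAbove (Set.range (gridSum f S p lo hi))

/-- Hardy–Krause-type variation of `f` on the box `[lo, hi]` with anchor `p`: the sum, over all
nonempty sets `S` of coordinates, of the Vitali variation of the restriction of `f` to the face
of `[lo, hi]` whose coordinates outside `S` are fixed according to `p`. -/
def hkVarOn {d : ℕ} (f : (Fin d → ℝ) → ℝ) (p lo hi : Fin d → ℝ) : ℝ :=
  ∑ S ∈ (Finset.univ : Finset (Fin d)).powerset.erase ∅, vitaliVar f S p lo hi

/-- All the Vitali variations occurring in `hkVarOn` are bounded. -/
def BddHKVarOn {d : ℕ} (f : (Fin d → ℝ) → ℝ) (p lo hi : Fin d → ℝ) : Prop :=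
  ∀ S ∈ (Finset.univ : Finset (Fin d)).powerset.erase ∅, BddVitali f S p lo hi

/-- The Hardy–Krause variation of `f` on `[0,1]^d`, anchored at `1`. -/
def hkVar {d : ℕ} (f : (Fin d → ℝ) → ℝ) : ℝ := hkVarOn f 1 0 1

/-- `f` has bounded Hardy–Krause variation (anchored at `1`). -/
def BddHKVar {d : ℕ} (f : (Fin d → ℝ) → ℝ) : Prop := BddHKVarOn f 1 0 1

/-- The Hardy–Krause variation of `f` on the box `[0, a]`, anchored at `0`. -/
def hkVar0On {d : ℕ} (f : (Fin d → ℝ) → ℝ) (a : Fin d → ℝ) : ℝ := hkVarOn f 0 0 a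

/-- The Hardy–Krause variation of `f` on `[0,1]^d`, anchored at `0`. -/
def hkVar0 {d : ℕ} (f : (Fin d → ℝ) → ℝ) : ℝ := hkVarOn f 0 0 1

/-- `f` has bounded Hardy–Krause variation anchored at `0`. -/
def BddHKVar0 {d : ℕ} (f : (Fin d → ℝ) → ℝ) : Prop := BddHKVarOn f 0 0 1

/-- `f` is completely monotone: every quasi-volume of an axis-parallel box contained in a face
of `[0,1]^d` (coordinates outside the active set `S` being fixed at `0` or `1`) is nonnegative. -/
def CompletelyMonotone {d : ℕ} (f : (Fin d → ℝ) → ℝ) : Prop :=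
  ∀ S : Finset (Fin d), S.Nonempty → ∀ p : Fin d → ℝ, (∀ i ∉ S, p i = 0 ∨ p i = 1) →
    ∀ a b : Fin d → ℝ, a ∈ Set.Icc (0 : Fin d → ℝ) 1 → b ∈ Set.Icc (0 : Fin d → ℝ) 1 →
      a ≤ b → 0 ≤ quasiVol f S p a b

/-- `f` is coordinatewise right-continuous at every point of `[0,1]^d`. -/
def RightCts {d : ℕ} (f : (Fin d → ℝ) → ℝ) : Prop :=
  ∀ x ∈ Set.Icc (0 : Fin d → ℝ) 1, ∀ i : Fin d,
    Filter.Tendsto (fun y : ℝ => f (Function.update x i y))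
      (nhdsWithin (x i) (Set.Icc (x i) 1)) (nhds (f x))

/-- The star-discrepancy of the points `x 1, …, x N` with respect to the measure `μ`. -/
def starDisc {d : ℕ} (N : ℕ) (x : Fin N → Fin d → ℝ) (μ : Measure (Fin d → ℝ)) : ℝ :=
  ⨆ a : Set.Icc (0 : Fin d → ℝ) 1,
    |(∑ n : Fin N, Set.indicator (Set.Icc 0 (a : Fin d → ℝ)) (fun _ => (1 : ℝ)) (x n)) / N
      - (μ (Set.Icc 0 (a : Fin d → ℝ))).toReal|

/-! The transformation `T` pulls every anchored box back to an anchored box: since `G_s⁻¹` is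
the lower Galois adjoint of `G_s` on `[0,1]`, the point `T x` lies in `[0, a]` exactly when `x`
lies in `[0, G(a)]`, where `G(a) = (G_1(a_1), …, G_d(a_d))`, and the product structure of `μ`
gives `μ([0, a]) = λ([0, G(a)])`. So the local discrepancy of the transformed points at `a`
equals the uniform local discrepancy of the original points at `G(a)`. Taking suprema gives the
inequality, and equality when `a ↦ G(a)` maps `[0,1]^d` onto itself. -/

def distFun (ν : Measure ℝ) (t : ℝ) : ℝ := (ν (Set.Icc 0 t)).toReal

theorem monotone_distFun (ν : Measure ℝ) [IsFiniteMeasure ν] : Monotone (distFun ν) :=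
  fun _ _ h => ENNReal.toReal_mono (measure_ne_top _ _) (measure_mono (Set.Icc_subset_Icc_right h))

theorem distFun_mem_Icc (ν : Measure ℝ) [IsProbabilityMeasure ν] (t : ℝ) :
    distFun ν t ∈ Set.Icc (0 : ℝ) 1 :=
  ⟨ENNReal.toReal_nonneg, ENNReal.toReal_le_of_le_ofReal zero_le_one (by simp [prob_le_one])⟩

theorem le_iff_le_of_isLeast {α β : Type*} [Preorder α] [Preorder β] {G : α → β}
    (hG : Monotone G) {S : Set α} {y : β} {g : α} (hg : IsLeast {t | t ∈ S ∧ y ≤ G t} g)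
    {t : α} (ht : t ∈ S) : g ≤ t ↔ y ≤ G t :=
  ⟨fun h => hg.1.2.trans (hG h), fun h => hg.2 ⟨ht, h⟩⟩

def localDisc {d : ℕ} (N : ℕ) (x : Fin N → Fin d → ℝ) (μ : Measure (Fin d → ℝ))
    (a : Fin d → ℝ) : ℝ :=
  |(∑ n : Fin N, Set.indicator (Set.Icc 0 a) (fun _ => (1 : ℝ)) (x n)) / N
    - (μ (Set.Icc 0 a)).toReal|

theorem starDisc_eq_iSup_localDisc {d : ℕ} (N : ℕ) (x : Fin N → Fin d → ℝ)
    (μ : Measure (Fin d → ℝ)) :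
    starDisc N x μ = ⨆ a : Set.Icc (0 : Fin d → ℝ) 1, localDisc N x μ a :=
  rfl

theorem localDisc_congr {d N : ℕ} {x y : Fin N → Fin d → ℝ} {μ ν : Measure (Fin d → ℝ)}
    {a b : Fin d → ℝ} (hmem : ∀ n, y n ∈ Set.Icc 0 a ↔ x n ∈ Set.Icc 0 b)
    (hmeas : (μ (Set.Icc 0 a)).toReal = (ν (Set.Icc 0 b)).toReal) :
    localDisc N y μ a = localDisc N x ν b := by
  classical
  have hcount : ∑ n : Fin N, (Set.Icc 0 a).indicator (fun _ => (1 : ℝ)) (y n)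
      = ∑ n : Fin N, (Set.Icc 0 b).indicator (fun _ => (1 : ℝ)) (x n) :=
    Finset.sum_congr rfl fun n _ => by simp only [Set.indicator_apply, hmem]
  rw [localDisc, localDisc, hcount, hmeas]

theorem localDisc_le_one {d N : ℕ} (x : Fin N → Fin d → ℝ) {μ : Measure (Fin d → ℝ)}
    {a : Fin d → ℝ} (hμa : (μ (Set.Icc 0 a)).toReal ≤ 1) : localDisc N x μ a ≤ 1 := by
  have hcount : (∑ n : Fin N, Set.indicator (Set.Icc 0 a) (fun _ => (1 : ℝ)) (x n)) ≤ N := by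
    calc _ ≤ ∑ _n : Fin N, (1 : ℝ) :=
          Finset.sum_le_sum fun n _ => Set.indicator_le_self' (fun _ _ => zero_le_one) _
      _ = N := by simp
  have hcount0 : 0 ≤ ∑ n : Fin N, Set.indicator (Set.Icc 0 a) (fun _ => (1 : ℝ)) (x n) :=
    Finset.sum_nonneg fun n _ => Set.indicator_nonneg (fun _ _ => zero_le_one) _
  have hfrac_le : (∑ n : Fin N, Set.indicator (Set.Icc 0 a) (fun _ => (1 : ℝ)) (x n)) / N ≤ 1 :=
    div_le_one_of_le₀ hcount N.cast_nonneg
  have hfrac_nonneg := div_nonneg hcount0 N.cast_nonneg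
  have hμa0 : 0 ≤ (μ (Set.Icc 0 a)).toReal := ENNReal.toReal_nonneg
  exact abs_sub_le_iff.2 ⟨by linarith, by linarith⟩

theorem bddAbove_range_localDisc_volume {d N : ℕ} (x : Fin N → Fin d → ℝ) :
    BddAbove (Set.range fun a : Set.Icc (0 : Fin d → ℝ) 1 => localDisc N x volume a) := by
  refine ⟨1, Set.forall_mem_range.2 fun a => localDisc_le_one x ?_⟩
  rw [Real.volume_Icc_pi_toReal a.2.1]
  exact Finset.prod_le_one (fun i _ => by simpa using a.2.1 i) (fun i _ => by simpa using a.2.2 i)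

section Product

variable {d : ℕ} (μs : Fin d → Measure ℝ)

def distMap (a : Fin d → ℝ) : Fin d → ℝ := fun s => distFun (μs s) (a s)

theorem mapsTo_distMap [∀ s, IsProbabilityMeasure (μs s)] :
    Set.MapsTo (distMap μs) (Set.Icc 0 1) (Set.Icc 0 1) :=
  fun _ _ => ⟨fun _ => (distFun_mem_Icc _ _).1, fun _ => (distFun_mem_Icc _ _).2⟩

theorem surjOn_distMap (hbij : ∀ s, Set.BijOn (distFun (μs s)) (Set.Icc 0 1) (Set.Icc 0 1)) :
    Set.SurjOn (distMap μs) (Set.Icc 0 1) (Set.Icc 0 1) := by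
  intro b hb
  choose t ht hGt using fun s => (hbij s).surjOn ⟨hb.1 s, hb.2 s⟩
  exact ⟨t, ⟨fun s => (ht s).1, fun s => (ht s).2⟩, funext hGt⟩

theorem toReal_measure_Icc_eq_volume_distMap {μ : Measure (Fin d → ℝ)}
    (hprod : ∀ x ∈ Set.Icc (0 : Fin d → ℝ) 1,
      μ (Set.Icc 0 x) = ∏ s : Fin d, μs s (Set.Icc 0 (x s)))
    {a : Fin d → ℝ} (ha : a ∈ Set.Icc 0 1) :
    (μ (Set.Icc 0 a)).toReal = (volume (Set.Icc 0 (distMap μs a))).toReal := by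
  have hG0 : (0 : Fin d → ℝ) ≤ distMap μs a := fun _ => ENNReal.toReal_nonneg
  rw [hprod a ha, ENNReal.toReal_prod, Real.volume_Icc_pi_toReal hG0]
  simp [distMap, distFun]

theorem mem_Icc_zero_iff_mem_Icc_distMap [∀ s, IsFiniteMeasure (μs s)] {Ginv : Fin d → ℝ → ℝ}
    (hGinv : ∀ s : Fin d, ∀ y ∈ Set.Icc (0 : ℝ) 1,
      IsLeast {t : ℝ | t ∈ Set.Icc (0 : ℝ) 1 ∧ y ≤ distFun (μs s) t} (Ginv s y))
    {x a : Fin d → ℝ} (hx : x ∈ Set.Icc 0 1) (ha : a ∈ Set.Icc 0 1) :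
    (fun s => Ginv s (x s)) ∈ Set.Icc 0 a ↔ x ∈ Set.Icc 0 (distMap μs a) := by
  have hGinv_x s := hGinv s (x s) ⟨hx.1 s, hx.2 s⟩
  have hGinv_le s := le_iff_le_of_isLeast (monotone_distFun (μs s)) (hGinv_x s) ⟨ha.1 s, ha.2 s⟩
  simp only [Set.mem_Icc, Pi.le_def, distMap, ← hGinv_le]
  exact ⟨fun h => ⟨hx.1, h.2⟩, fun h => ⟨fun s => (hGinv_x s).1.1.1, h.2⟩⟩

end Product

theorem stmt18_general {d : ℕ} (N : ℕ) (μ : Measure (Fin d → ℝ))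
    (μs : Fin d → Measure ℝ) [∀ s, IsProbabilityMeasure (μs s)]
    (hprod : ∀ x ∈ Set.Icc (0 : Fin d → ℝ) 1,
      μ (Set.Icc 0 x) = ∏ s : Fin d, μs s (Set.Icc 0 (x s)))
    (Ginv : Fin d → ℝ → ℝ)
    (hGinv : ∀ s : Fin d, ∀ y ∈ Set.Icc (0 : ℝ) 1,
      IsLeast {t : ℝ | t ∈ Set.Icc (0 : ℝ) 1 ∧ y ≤ (μs s (Set.Icc 0 t)).toReal} (Ginv s y))
    (x : Fin N → Fin d → ℝ) (hx : ∀ n, x n ∈ Set.Icc (0 : Fin d → ℝ) 1) :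
    starDisc N (fun n i => Ginv i (x n i)) μ ≤ starDisc N x volume ∧
    ((∀ s : Fin d, Set.BijOn (fun t : ℝ => (μs s (Set.Icc 0 t)).toReal)
        (Set.Icc (0 : ℝ) 1) (Set.Icc (0 : ℝ) 1)) →
      starDisc N (fun n i => Ginv i (x n i)) μ = starDisc N x volume) := by
  let φ := (mapsTo_distMap μs).restrict
  have hpullback (a : Set.Icc (0 : Fin d → ℝ) 1) :
      localDisc N (fun n i => Ginv i (x n i)) μ a = localDisc N x volume (φ a) :=
    localDisc_congr (fun n => mem_Icc_zero_iff_mem_Icc_distMap μs hGinv (hx n) a.2)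
      (toReal_measure_Icc_eq_volume_distMap μs hprod a.2)
  simp only [starDisc_eq_iSup_localDisc, hpullback]
  refine ⟨ciSup_le fun a => le_ciSup (bddAbove_range_localDisc_volume x) (φ a), fun hbij => ?_⟩
  exact ((mapsTo_distMap μs).restrict_surjective_iff.2 (surjOn_distMap μs hbij)).iSup_comp
    (fun b => localDisc N x volume b)

/-- Transformation of point sets for product measures: the star-discrepancy of the transformed
point set with respect to `μ` is at most the (uniform) star-discrepancy of the original point
set, with equality when all the one-dimensional distribution functions are invertible. -/
theorem stmt18 {d : ℕ} (N : ℕ) (hN : 0 < N) (μ : Measure (Fin d → ℝ))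
    [IsProbabilityMeasure μ] (hμ : μ (Set.Icc (0 : Fin d → ℝ) 1) = 1)
    (μs : Fin d → Measure ℝ) [∀ s, IsProbabilityMeasure (μs s)]
    (hμs : ∀ s, μs s (Set.Icc (0 : ℝ) 1) = 1)
    (hprod : ∀ x ∈ Set.Icc (0 : Fin d → ℝ) 1,
      μ (Set.Icc 0 x) = ∏ s : Fin d, μs s (Set.Icc 0 (x s)))
    (Ginv : Fin d → ℝ → ℝ)
    (hGinv : ∀ s : Fin d, ∀ y ∈ Set.Icc (0 : ℝ) 1,
      IsLeast {t : ℝ | t ∈ Set.Icc (0 : ℝ) 1 ∧ y ≤ (μs s (Set.Icc 0 t)).toReal} (Ginv s y))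
    (x : Fin N → Fin d → ℝ) (hx : ∀ n, x n ∈ Set.Icc (0 : Fin d → ℝ) 1) :
    starDisc N (fun n i => Ginv i (x n i)) μ ≤ starDisc N x volume ∧
    ((∀ s : Fin d, Set.BijOn (fun t : ℝ => (μs s (Set.Icc 0 t)).toReal)
        (Set.Icc (0 : ℝ) 1) (Set.Icc (0 : ℝ) 1)) →
      starDisc N (fun n i => Ginv i (x n i)) μ = starDisc N x volume) :=
  stmt18_general N μ μs hprod Ginv hGinv x hx
end
end

section
/- Chelson's claimed invariance of the discrepancy under the Rosenblatt transformation fails: let d=2, let g be the probability density on [0,1]^2 with g(y_1,y_2)=1/2 if y_1 ≤ y_2 and g(y_1,y_2)=3/2 if y_1 > y_2, and let μ_G be the corresponding Borel probability measure. Then the marginal distribution function is G_1(y_1)=(y_1²+y_1)/2, and the conditional distribution function is G_2(y_2|y_1)=(y_2+2y_1)/(1+2y_1) if y_1 ≤ y_2 and G_2(y_2|y_1)=3y_2/(1+2y_1) if y_1 > y_2. For the single point x=(56/81, 20/23), the Rosenblatt transform z=(G_1^{-1}(x_1), G_2^{-1}(x_2|z_1)) equals (7/9, 20/27), and the star-discrepancies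 satisfy D_1*(z;μ_G)=610/729 while D_1*(x)=20/23; in particular D_1*(z;μ_G) ≠ D_1*(x). -/
open MeasureTheory Finset

noncomputable section

/-! Fubini and the one-dimensional slices `∫₀^c g(x, u) du = min x c + c / 2` give `μ_G([0, a])`
in closed form (`diagCDF a`), and `G₁`, `G₂` with it. For a single point `z` of the unit square,
a box missing `z` lies below `(z₀, 1)` or `(1, z₁)`, and the boxes `[0, (1, t)]`, `t ↑ z₁`, exhaust
the bound `μ([0, (1, z₁)])`; so this bound is the star-discrepancy as soon as it dominates
`μ([0, (z₀, 1)])` and the defect `1 - μ([0, z])` of the boxes containing `z`. It equals `610/729`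
for `z` and `μ_G`, but `20/23` for `x` and Lebesgue measure. -/

open Set

theorem setIntegral_Icc_fin_two {f : (Fin 2 → ℝ) → ℝ} {a b : Fin 2 → ℝ} (hab : a ≤ b)
    (hf : IntegrableOn f (Icc a b)) :
    ∫ y in Icc a b, f y = ∫ x in a 0..b 0, ∫ u in a 1..b 1, f ![x, u] := by
  have hpre : MeasurableEquiv.finTwoArrow.symm ⁻¹' Icc a b =
      Icc (a 0) (b 0) ×ˢ Icc (a 1) (b 1) := by
    rw [Icc_prod_Icc]
    exact (OrderIso.finTwoArrowIso ℝ).symm.preimage_Icc a b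
  have hmp := (volume_preserving_finTwoArrow ℝ).symm
  rw [← hmp.setIntegral_preimage_emb (MeasurableEquiv.measurableEmbedding _), hpre,
    Measure.volume_eq_prod, setIntegral_prod]
  · simp only [intervalIntegral.integral_of_le (hab 0), intervalIntegral.integral_of_le (hab 1),
      integral_Icc_eq_integral_Ioc]
    rfl
  · rw [← Measure.volume_eq_prod, ← hpre]
    exact hmp.integrableOn_comp_preimage (MeasurableEquiv.measurableEmbedding _) |>.mpr hf

theorem intervalIntegral_ite_le {a b c : ℝ} (hac : a ≤ c) (hcb : c ≤ b) (p q : ℝ) :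
    ∫ u in a..b, (if c ≤ u then p else q) = q * (c - a) + p * (b - c) := by
  have hint : ∀ a b : ℝ, IntervalIntegrable (fun u : ℝ => if c ≤ u then p else q) volume a b :=
    fun a b => IntegrableOn.intervalIntegrable <| Measure.integrableOn_of_bounded
      (M := max |p| |q|) measure_Icc_lt_top.ne
      (measurable_const.ite measurableSet_Ici measurable_const).aestronglyMeasurable
      (.of_forall fun u => by split_ifs <;> simp)
  rw [← intervalIntegral.integral_add_adjacent_intervals (hint a c) (hint c b)]
  have hleft : ∫ u in a..c, (if c ≤ u then p else q) = ∫ _ in a..c, q := by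
    refine intervalIntegral.integral_congr_ae ?_
    filter_upwards [volume.ae_ne c] with u hne hu
    rw [uIoc_of_le hac] at hu
    exact if_neg (lt_of_le_of_ne hu.2 hne).not_ge
  have hright : ∫ u in c..b, (if c ≤ u then p else q) = ∫ _ in c..b, p :=
    intervalIntegral.integral_congr fun u hu => if_pos (by rw [uIcc_of_le hcb] at hu; exact hu.1)
  simp only [hleft, hright, intervalIntegral.integral_const, smul_eq_mul]
  ring

theorem volume_Icc_zero_one_pi {ι : Type*} [Fintype ι] : volume (Icc (0 : ι → ℝ) 1) = 1 := by
  simp [Real.volume_Icc_pi]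

theorem volume_real_Icc_fin_two {a : Fin 2 → ℝ} (ha : 0 ≤ a) :
    volume.real (Icc 0 a) = a 0 * a 1 := by
  simp [measureReal_def, Real.volume_Icc_pi_toReal ha]

theorem vecCons_mem_Icc_zero_one {u v : ℝ} (hu : u ∈ Set.Icc 0 1) (hv : v ∈ Set.Icc 0 1) :
    ![u, v] ∈ Icc (0 : Fin 2 → ℝ) 1 :=
  ⟨Fin.forall_fin_two.2 ⟨hu.1, hv.1⟩, Fin.forall_fin_two.2 ⟨hu.2, hv.2⟩⟩

theorem starDisc_one_fin_two_eq {μ : Measure (Fin 2 → ℝ)} (hμ : μ (Icc 0 1) ≤ 1)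
    {F : (Fin 2 → ℝ) → ℝ} (hF : ∀ a ∈ Icc (0 : Fin 2 → ℝ) 1, μ.real (Icc 0 a) = F a)
    (hFc : Continuous F) {z : Fin 2 → ℝ} (hz : z ∈ Set.Icc 0 1) (hz₁ : 0 < z 1)
    (hin : 1 - F z ≤ F ![1, z 1]) (hleft : F ![z 0, 1] ≤ F ![1, z 1]) :
    starDisc 1 (fun _ => z) μ = F ![1, z 1] := by
  have hmono : ∀ {a b : Fin 2 → ℝ}, b ≤ 1 → a ≤ b → μ.real (Icc 0 a) ≤ μ.real (Icc 0 b) :=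
    fun hb hab => measureReal_mono (Icc_subset_Icc_right hab) (measure_ne_top_of_subset
      (Icc_subset_Icc_right hb) (ne_top_of_le_ne_top ENNReal.one_ne_top hμ))
  have hle_one : ∀ {a : Fin 2 → ℝ}, a ≤ 1 → μ.real (Icc 0 a) ≤ 1 := fun ha =>
    (hmono le_rfl ha).trans (ENNReal.toReal_le_of_le_ofReal zero_le_one (by simpa using hμ))
  have h01 : (1 : ℝ) ∈ Icc (0 : ℝ) 1 := ⟨zero_le_one, le_rfl⟩
  have : Nonempty (Icc (0 : Fin 2 → ℝ) 1) := ⟨⟨0, left_mem_Icc.2 zero_le_one⟩⟩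
  unfold starDisc
  simp only [Fin.sum_univ_one, Nat.cast_one, div_one, ← measureReal_def]
  apply ciSup_eq_of_forall_le_of_forall_lt_exists_gt
  · rintro ⟨a, ha⟩
    by_cases hza : z ≤ a
    · rw [indicator_of_mem (show z ∈ Icc 0 a from ⟨hz.1, hza⟩),
        abs_of_nonneg (sub_nonneg.2 (hle_one ha.2))]
      linarith [hF z hz ▸ hmono ha.2 hza]
    · rw [indicator_of_notMem fun h => hza h.2, zero_sub, abs_neg,
        abs_of_nonneg measureReal_nonneg]
      have hz₀ : z 0 ∈ Icc (0 : ℝ) 1 := ⟨hz.1 0, hz.2 0⟩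
      have hz₁' : z 1 ∈ Icc (0 : ℝ) 1 := ⟨hz.1 1, hz.2 1⟩
      have hmiss : a 0 < z 0 ∨ a 1 < z 1 := by
        contrapose! hza
        exact Fin.forall_fin_two.2 hza
      rcases hmiss with h | h
      · calc μ.real (Icc 0 a) ≤ μ.real (Icc 0 ![z 0, 1]) :=
              hmono (vecCons_mem_Icc_zero_one hz₀ h01).2 (Fin.forall_fin_two.2 ⟨h.le, ha.2 1⟩)
          _ = F ![z 0, 1] := hF _ (vecCons_mem_Icc_zero_one hz₀ h01)
          _ ≤ F ![1, z 1] := hleft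
      · calc μ.real (Icc 0 a) ≤ μ.real (Icc 0 ![1, z 1]) :=
              hmono (vecCons_mem_Icc_zero_one h01 hz₁').2 (Fin.forall_fin_two.2 ⟨ha.2 0, h.le⟩)
          _ = F ![1, z 1] := hF _ (vecCons_mem_Icc_zero_one h01 hz₁')
  · intro w hw
    have hcont : Continuous fun t : ℝ => F ![1, t] := by fun_prop
    obtain ⟨t, ⟨ht₀, htz⟩, hwt⟩ := (Filter.Eventually.and (Ioo_mem_nhdsLT hz₁)
      (nhdsWithin_le_nhds ((hcont.tendsto (z 1)).eventually (lt_mem_nhds hw)))).exists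
    have hta : ![1, t] ∈ Icc (0 : Fin 2 → ℝ) 1 :=
      vecCons_mem_Icc_zero_one h01 ⟨ht₀.le, htz.le.trans (hz.2 1)⟩
    refine ⟨⟨_, hta⟩, ?_⟩
    rw [indicator_of_notMem fun h => htz.not_ge (h.2 1), zero_sub, abs_neg, hF _ hta]
    exact hwt.trans_le (le_abs_self _)

def diagDensity (y : Fin 2 → ℝ) : ℝ := if y 0 ≤ y 1 then 1 / 2 else 3 / 2

def diagMeasure : Measure (Fin 2 → ℝ) :=
  (volume.restrict (Icc 0 1)).withDensity fun y => ENNReal.ofReal (diagDensity y)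

def diagCDF (a : Fin 2 → ℝ) : ℝ :=
  if a 0 ≤ a 1 then (a 0 ^ 2 + a 0 * a 1) / 2 else (3 * a 0 * a 1 - a 1 ^ 2) / 2

theorem diagDensity_nonneg (y : Fin 2 → ℝ) : 0 ≤ diagDensity y := by
  unfold diagDensity
  split_ifs <;> norm_num

theorem integrableOn_diagDensity {s : Set (Fin 2 → ℝ)} (hs : volume s ≠ ⊤) :
    IntegrableOn diagDensity s :=
  Measure.integrableOn_of_bounded (M := 3 / 2) hs
    ((measurable_const.ite (measurableSet_le (measurable_pi_apply 0) (measurable_pi_apply 1))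
      measurable_const).aestronglyMeasurable)
    (.of_forall fun y => by unfold diagDensity; split_ifs <;> norm_num)

theorem integral_diagDensity_slice {x c : ℝ} (hx : 0 ≤ x) (hc : 0 ≤ c) :
    ∫ u in (0 : ℝ)..c, diagDensity ![x, u] = min x c + c / 2 := by
  have hdens : ∀ u, diagDensity ![x, u] = if x ≤ u then 1 / 2 else 3 / 2 := fun u => rfl
  simp only [hdens]
  rcases le_or_gt x c with h | h
  · rw [intervalIntegral_ite_le hx h, min_eq_left h]
    ring
  · have hconst : ∫ u in (0 : ℝ)..c, (if x ≤ u then (1 : ℝ) / 2 else 3 / 2) =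
        ∫ _ in (0 : ℝ)..c, 3 / 2 :=
      intervalIntegral.integral_congr fun u hu =>
        if_neg (by rw [uIcc_of_le hc] at hu; exact (hu.2.trans_lt h).not_ge)
    rw [hconst, intervalIntegral.integral_const, min_eq_right h.le, smul_eq_mul]
    ring

theorem integral_diagDensity_Icc {a : Fin 2 → ℝ} (ha : 0 ≤ a) :
    ∫ y in Icc 0 a, diagDensity y = diagCDF a := by
  have ha₀ : (0 : ℝ) ≤ a 0 := ha 0
  have ha₁ : (0 : ℝ) ≤ a 1 := ha 1
  have hslices : ∫ x in (0 : ℝ)..a 0, ∫ u in (0 : ℝ)..a 1, diagDensity ![x, u] =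
      ∫ x in (0 : ℝ)..a 0, (min x (a 1) + a 1 / 2) :=
    intervalIntegral.integral_congr fun x hx =>
      integral_diagDensity_slice (by rw [uIcc_of_le ha₀] at hx; exact hx.1) ha₁
  have hlin : ∀ c : ℝ, ∫ x in (0 : ℝ)..c, (x + a 1 / 2) = (c ^ 2 + c * a 1) / 2 := fun c => by
    rw [intervalIntegral.integral_add intervalIntegral.intervalIntegrable_id
      intervalIntegrable_const, integral_id, intervalIntegral.integral_const, smul_eq_mul]
    ring
  rw [setIntegral_Icc_fin_two ha (integrableOn_diagDensity measure_Icc_lt_top.ne),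
    Pi.zero_apply, Pi.zero_apply, hslices, diagCDF]
  split_ifs with h
  · rw [← hlin]
    refine intervalIntegral.integral_congr fun x hx => ?_
    rw [uIcc_of_le ha₀] at hx
    rw [min_eq_left (hx.2.trans h)]
  · have hcont : Continuous fun x => min x (a 1) + a 1 / 2 := by fun_prop
    rw [← intervalIntegral.integral_add_adjacent_intervals (hcont.intervalIntegrable 0 (a 1))
      (hcont.intervalIntegrable (a 1) (a 0))]
    have hleft : ∫ x in (0 : ℝ)..a 1, (min x (a 1) + a 1 / 2) =
        ∫ x in (0 : ℝ)..a 1, (x + a 1 / 2) :=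
      intervalIntegral.integral_congr fun x hx => by
        rw [uIcc_of_le ha₁] at hx
        rw [min_eq_left hx.2]
    have hright : ∫ x in a 1..a 0, (min x (a 1) + a 1 / 2) = ∫ _ in a 1..a 0, (3 / 2 * a 1) :=
      intervalIntegral.integral_congr fun x hx => by
        rw [uIcc_of_le (not_le.1 h).le] at hx
        rw [min_eq_right hx.1]
        ring
    rw [hleft, hright, hlin, intervalIntegral.integral_const, smul_eq_mul]
    ring

theorem diagMeasure_Icc {a : Fin 2 → ℝ} (ha : a ∈ Set.Icc 0 1) :
    diagMeasure (Icc 0 a) = ENNReal.ofReal (diagCDF a) := by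
  rw [diagMeasure, withDensity_apply _ measurableSet_Icc,
    Measure.restrict_restrict measurableSet_Icc, inter_eq_left.2 (Icc_subset_Icc_right ha.2),
    ← integral_diagDensity_Icc ha.1,
    ofReal_integral_eq_lintegral_ofReal (integrableOn_diagDensity measure_Icc_lt_top.ne)
      (.of_forall diagDensity_nonneg)]

theorem diagMeasure_real_Icc {a : Fin 2 → ℝ} (ha : a ∈ Set.Icc 0 1) :
    diagMeasure.real (Icc 0 a) = diagCDF a := by
  rw [measureReal_def, diagMeasure_Icc ha, ENNReal.toReal_ofReal]
  rw [← integral_diagDensity_Icc ha.1]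
  exact setIntegral_nonneg measurableSet_Icc fun y _ => diagDensity_nonneg y

theorem diagMeasure_Icc_zero_one : diagMeasure (Icc 0 1) = 1 := by
  rw [diagMeasure_Icc ⟨zero_le_one, le_rfl⟩]
  norm_num [diagCDF]

theorem continuous_diagCDF : Continuous diagCDF :=
  Continuous.if_le (by fun_prop) (by fun_prop) (continuous_apply 0) (continuous_apply 1)
    fun a h => by rw [h]; ring

theorem diagMeasure_real_Icc_vecCons_one {y₁ : ℝ} (hy₁ : y₁ ∈ Set.Icc 0 1) :
    diagMeasure.real (Icc 0 ![y₁, 1]) = (y₁ ^ 2 + y₁) / 2 := by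
  rw [diagMeasure_real_Icc (vecCons_mem_Icc_zero_one hy₁ ⟨zero_le_one, le_rfl⟩)]
  simp [diagCDF, hy₁.2]

theorem integral_diagDensity_slice_div {y₁ y₂ : ℝ} (hy₁ : y₁ ∈ Set.Icc 0 1) (hy₂ : 0 ≤ y₂) :
    (∫ u in (0 : ℝ)..y₂, diagDensity ![y₁, u]) / (∫ u in (0 : ℝ)..1, diagDensity ![y₁, u]) =
      if y₁ ≤ y₂ then (y₂ + 2 * y₁) / (1 + 2 * y₁) else 3 * y₂ / (1 + 2 * y₁) := by
  rw [integral_diagDensity_slice hy₁.1 hy₂, integral_diagDensity_slice hy₁.1 zero_le_one,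
    min_eq_left hy₁.2]
  have hne : y₁ + 1 / 2 ≠ 0 := by linarith [hy₁.1]
  have hne' : 1 + 2 * y₁ ≠ 0 := by linarith [hy₁.1]
  split_ifs with h
  · rw [min_eq_left h, div_eq_div_iff hne hne']
    ring
  · rw [min_eq_right (not_le.1 h).le, div_eq_div_iff hne hne']
    ring

/-- Chelson's claimed invariance of the star-discrepancy under the Rosenblatt transformation
fails: an explicit two-dimensional counterexample. -/
theorem stmt19 (g : (Fin 2 → ℝ) → ℝ)
    (hg : g = fun y => if y 0 ≤ y 1 then 1 / 2 else 3 / 2)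
    (μG : Measure (Fin 2 → ℝ))
    (hμG : μG = (volume.restrict (Set.Icc (0 : Fin 2 → ℝ) 1)).withDensity
      fun y => ENNReal.ofReal (g y))
    (G₁ : ℝ → ℝ) (hG₁ : G₁ = fun y₁ => (μG (Set.Icc 0 ![y₁, 1])).toReal)
    (G₂ : ℝ → ℝ → ℝ)
    (hG₂ : G₂ = fun y₁ y₂ => (∫ u in (0 : ℝ)..y₂, g ![y₁, u]) / ∫ u in (0 : ℝ)..1, g ![y₁, u])
    (x z : Fin 2 → ℝ) (hx : x = ![56 / 81, 20 / 23]) (hz : z = ![7 / 9, 20 / 27]) :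
    (∀ y₁ ∈ Set.Icc (0 : ℝ) 1, G₁ y₁ = (y₁ ^ 2 + y₁) / 2) ∧
    (∀ y₁ ∈ Set.Icc (0 : ℝ) 1, ∀ y₂ ∈ Set.Icc (0 : ℝ) 1,
      G₂ y₁ y₂ = if y₁ ≤ y₂ then (y₂ + 2 * y₁) / (1 + 2 * y₁) else 3 * y₂ / (1 + 2 * y₁)) ∧
    G₁ (z 0) = x 0 ∧ G₂ (z 0) (z 1) = x 1 ∧
    starDisc 1 (fun _ => z) μG = 610 / 729 ∧
    starDisc 1 (fun _ => x) volume = 20 / 23 ∧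
    starDisc 1 (fun _ => z) μG ≠ starDisc 1 (fun _ => x) volume := by
  replace hg : g = diagDensity := hg
  subst hg
  replace hμG : μG = diagMeasure := hμG
  subst hμG hG₁ hG₂ hx hz
  have hz_disc : starDisc 1 (fun _ => ![7 / 9, 20 / 27]) diagMeasure = 610 / 729 := by
    rw [starDisc_one_fin_two_eq diagMeasure_Icc_zero_one.le (fun a ha => diagMeasure_real_Icc ha)
      continuous_diagCDF] <;> norm_num [diagCDF, Pi.le_def, Fin.forall_fin_two]
  have hx_disc : starDisc 1 (fun _ => ![56 / 81, 20 / 23]) volume = 20 / 23 := by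
    rw [starDisc_one_fin_two_eq volume_Icc_zero_one_pi.le
      (fun a ha => volume_real_Icc_fin_two ha.1) (by fun_prop)]
      <;> norm_num [Pi.le_def, Fin.forall_fin_two]
  refine ⟨fun y₁ hy₁ => diagMeasure_real_Icc_vecCons_one hy₁,
    fun y₁ hy₁ y₂ hy₂ => integral_diagDensity_slice_div hy₁ hy₂.1, ?_, ?_, hz_disc, hx_disc,
    by rw [hz_disc, hx_disc]; norm_num⟩
  · show diagMeasure.real (Icc 0 ![7 / 9, 1]) = 56 / 81
    rw [diagMeasure_real_Icc_vecCons_one] <;> norm_num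
  · show (∫ u in (0 : ℝ)..20 / 27, diagDensity ![7 / 9, u]) /
        (∫ u in (0 : ℝ)..1, diagDensity ![7 / 9, u]) = 20 / 23
    rw [integral_diagDensity_slice_div] <;> norm_num
end
end
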